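/- (Itô isometry for simple processes.) Let 0 = t₀ < t₁ < ⋯ < t_m = T, let (𝓕_l)_{l=0,…,m} be an increasing family of sub-σ-algebras of 𝓕 on a probability space (Ω,𝓕,ℙ), and for each k = 0,…,m−1 let h_k be an 𝓕_k-measurable, square-integrable ℝⁿ⊗ℝⁿ-valued random variable and ΔB_k an ℝⁿ⊗ℝⁿ-valued random variable that is 𝓕_{k+1}-measurable, independent of 𝓕_k, and whose n² entries are independent centered Gaussians each of variance t_{k+1} − t_k. Then 𝔼‖Σ_{k=0}^{m−1} h_k ΔB_k‖²_HS = n Σ_{k=0}^{m−1} (t_{k+1} − t_k) 𝔼‖h_k‖²_HS. -/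

import Mathlib

open MeasureTheory ProbabilityTheory Matrix
open scoped NNReal

/-!
Write `X_k = h_k ΔB_k`. For `k < l` the matrix `X_kᵀ h_l` is `𝓕_l`-measurable, hence independent
of the centred increment `ΔB_l`, so `𝔼⟨X_k, X_l⟩_HS = 𝔼 tr ((X_kᵀ h_l) ΔB_l) = 0` and the
expected squared norm of the sum is the sum of the expected squared norms. For a single term,
`‖h ΔB‖²_HS = tr ((hᵀ h) (ΔB ΔBᵀ))` is the trace of a product of independent factors, and
`𝔼 [ΔB ΔBᵀ] = n (t_{k+1} - t_k) I` because distinct entries of `ΔB` are independent and centred.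
-/

/-- The Hilbert–Schmidt inner product of two `n × n` real matrices:
`⟨A, B⟩_HS = trace (Aᵀ * B)`. -/
def hsInner {n : ℕ} (A B : Matrix (Fin n) (Fin n) ℝ) : ℝ := (Aᵀ * B).trace

/-- The squared Hilbert–Schmidt norm `‖A‖²_HS`. -/
def hsNormSq {n : ℕ} (A : Matrix (Fin n) (Fin n) ℝ) : ℝ := hsInner A A

instance matrixMeasurableSpace {m n α : Type*} [MeasurableSpace α] :
    MeasurableSpace (Matrix m n α) :=
  inferInstanceAs (MeasurableSpace (m → n → α))

open Finset

section MatrixMeasurability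

variable {Ω ι κ ν : Type*} {mΩ : MeasurableSpace Ω}

lemma measurable_matrix_iff {f : Ω → Matrix ι κ ℝ} :
    Measurable f ↔ ∀ i j, Measurable fun ω => f ω i j :=
  ⟨fun hf i j => (measurable_pi_apply j).comp ((measurable_pi_apply i).comp hf),
    fun hf => measurable_pi_iff.2 fun i => measurable_pi_iff.2 (hf i)⟩

lemma Measurable.matrix_transpose {f : Ω → Matrix ι κ ℝ} (hf : Measurable f) :
    Measurable fun ω => (f ω)ᵀ :=
  measurable_matrix_iff.2 fun i j => measurable_matrix_iff.1 hf j i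

lemma Measurable.matrix_mul [Fintype κ] {f : Ω → Matrix ι κ ℝ} {g : Ω → Matrix κ ν ℝ}
    (hf : Measurable f) (hg : Measurable g) : Measurable fun ω => f ω * g ω :=
  measurable_matrix_iff.2 fun i j => by
    simp only [Matrix.mul_apply]
    exact Finset.measurable_sum _ fun k _ =>
      (measurable_matrix_iff.1 hf i k).mul (measurable_matrix_iff.1 hg k j)

end MatrixMeasurability

section MatrixLp

variable {Ω ι κ ν : Type*} [Fintype κ] {mΩ : MeasurableSpace Ω} {P : Measure Ω}

lemma integrable_mul_apply_of_memLp_two {M : Ω → Matrix ι κ ℝ} {N : Ω → Matrix κ ν ℝ}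
    (hM : ∀ i k, MemLp (fun ω => M ω i k) 2 P) (hN : ∀ k j, MemLp (fun ω => N ω k j) 2 P)
    (i : ι) (j : ν) : Integrable (fun ω => (M ω * N ω) i j) P := by
  simp only [Matrix.mul_apply]
  exact integrable_finsetSum _ fun k _ => (hM i k).integrable_mul (hN k j)

lemma memLp_two_mul_apply_of_indepFun {H : Ω → Matrix ι κ ℝ} {D : Ω → Matrix κ ν ℝ}
    (hHD : IndepFun H D P) (hH : ∀ i k, MemLp (fun ω => H ω i k) 2 P)
    (hD : ∀ k j, MemLp (fun ω => D ω k j) 2 P) (i : ι) (j : ν) :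
    MemLp (fun ω => (H ω * D ω) i j) 2 P := by
  simp only [Matrix.mul_apply]
  refine memLp_finsetSum _ fun k _ => ?_
  refine (memLp_two_iff_integrable_sq ((hH i k).1.mul (hD k j).1)).2 ?_
  have hsq : IndepFun (fun ω => H ω i k ^ 2) (fun ω => D ω k j ^ 2) P :=
    hHD.comp (φ := fun A : Matrix ι κ ℝ => A i k ^ 2) (ψ := fun B : Matrix κ ν ℝ => B k j ^ 2)
      ((measurable_matrix_iff.1 measurable_id i k).pow_const 2)
      ((measurable_matrix_iff.1 measurable_id k j).pow_const 2)
  have hint := hsq.integrable_mul (hH i k).integrable_sq (hD k j).integrable_sq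
  simp only [Pi.mul_apply, mul_pow]
  exact hint

lemma integral_trace_mul_of_indepFun [Fintype ι] {M : Ω → Matrix ι κ ℝ} {N : Ω → Matrix κ ι ℝ}
    (hMN : IndepFun M N P) (hM : ∀ i k, Integrable (fun ω => M ω i k) P)
    (hN : ∀ k i, Integrable (fun ω => N ω k i) P) :
    ∫ ω, (M ω * N ω).trace ∂P = ∑ i, ∑ k, (∫ ω, M ω i k ∂P) * ∫ ω, N ω k i ∂P := by
  have hentry (i : ι) (k : κ) : IndepFun (fun ω => M ω i k) (fun ω => N ω k i) P :=
    hMN.comp (φ := fun A : Matrix ι κ ℝ => A i k) (ψ := fun B : Matrix κ ι ℝ => B k i)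
      (measurable_matrix_iff.1 measurable_id i k) (measurable_matrix_iff.1 measurable_id k i)
  have hint : ∀ i k, Integrable (fun ω => M ω i k * N ω k i) P := fun i k =>
    (hentry i k).integrable_mul (hM i k) (hN k i)
  simp only [Matrix.trace, Matrix.diag, Matrix.mul_apply]
  rw [integral_finsetSum _ fun i _ => integrable_finsetSum _ fun k _ => hint i k]
  refine sum_congr rfl fun i _ => ?_
  rw [integral_finsetSum _ fun k _ => hint i k]
  exact sum_congr rfl fun k _ =>
    (hentry i k).integral_fun_mul_eq_mul_integral (hM i k).1 (hN k i).1

end MatrixLp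

lemma ProbabilityTheory.indepFun_comp_of_indep_comap {Ω β γ δ : Type*} {mΩ : MeasurableSpace Ω}
    [mβ : MeasurableSpace β] [MeasurableSpace γ] [MeasurableSpace δ] {P : Measure Ω}
    {G : MeasurableSpace Ω} {D : Ω → β} {Y : Ω → γ} (hD : Indep (.comap D mβ) G P)
    (hY : Measurable[G] Y) {ψ : β → δ} (hψ : Measurable ψ) :
    IndepFun Y (fun ω => ψ (D ω)) P := by
  rw [IndepFun_iff_Indep]
  refine indep_of_indep_of_le_right (indep_of_indep_of_le_left hD.symm hY.comap_le) ?_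
  rw [show (fun ω => ψ (D ω)) = ψ ∘ D from rfl, ← MeasurableSpace.comap_comp]
  exact MeasurableSpace.comap_mono hψ.comap_le

namespace ProbabilityTheory.HasLaw

variable {Ω : Type*} {mΩ : MeasurableSpace Ω} {P : Measure Ω} {Z : Ω → ℝ} {μ : ℝ} {v : ℝ≥0}

lemma memLp_of_gaussianReal (hZ : HasLaw Z (gaussianReal μ v) P) (p : ℝ≥0) : MemLp Z p P := by
  have := (memLp_id_gaussianReal (μ := μ) (v := v) p)
  rw [← hZ.map_eq] at this
  exact this.comp_of_map hZ.aemeasurable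

lemma integral_eq_of_gaussianReal (hZ : HasLaw Z (gaussianReal μ v) P) : ∫ ω, Z ω ∂P = μ := by
  rw [hZ.integral_eq, integral_id_gaussianReal]

lemma integral_sq_of_gaussianReal (hZ : HasLaw Z (gaussianReal 0 v) P) :
    ∫ ω, Z ω ^ 2 ∂P = v := by
  rw [← variance_id_gaussianReal (μ := 0), ← hZ.variance_eq,
    variance_eq_integral hZ.aemeasurable, hZ.integral_eq_of_gaussianReal]
  simp only [sub_zero]

end ProbabilityTheory.HasLaw

section HilbertSchmidt

variable {n : ℕ}

lemma hsInner_comm (A B : Matrix (Fin n) (Fin n) ℝ) : hsInner A B = hsInner B A := by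
  rw [hsInner, ← trace_transpose, transpose_mul, transpose_transpose, hsInner]

lemma hsNormSq_finsetSum {ι : Type*} (s : Finset ι) (A : ι → Matrix (Fin n) (Fin n) ℝ) :
    hsNormSq (∑ k ∈ s, A k) = ∑ k ∈ s, ∑ l ∈ s, hsInner (A k) (A l) := by
  simp only [hsNormSq, hsInner, transpose_sum, Finset.sum_mul, Finset.mul_sum, trace_sum]
  exact Finset.sum_comm

lemma hsNormSq_eq_sum_sq (A : Matrix (Fin n) (Fin n) ℝ) :
    hsNormSq A = ∑ i, ∑ j, A i j ^ 2 := by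
  simp only [hsNormSq, hsInner, trace, Matrix.diag, mul_apply, transpose_apply, sq]
  exact Finset.sum_comm

lemma sq_apply_le_hsNormSq (A : Matrix (Fin n) (Fin n) ℝ) (i j : Fin n) :
    A i j ^ 2 ≤ hsNormSq A := by
  rw [hsNormSq_eq_sum_sq]
  calc A i j ^ 2 ≤ ∑ j', A i j' ^ 2 :=
        single_le_sum (f := fun j' => A i j' ^ 2) (fun _ _ => sq_nonneg _) (mem_univ j)
    _ ≤ ∑ i', ∑ j', A i' j' ^ 2 :=
        single_le_sum (f := fun i' => ∑ j', A i' j' ^ 2)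
          (fun _ _ => sum_nonneg fun _ _ => sq_nonneg _) (mem_univ i)

lemma hsNormSq_mul (A B : Matrix (Fin n) (Fin n) ℝ) :
    hsNormSq (A * B) = (Aᵀ * A * (B * Bᵀ)).trace := by
  rw [hsNormSq, hsInner, transpose_mul, Matrix.mul_assoc, trace_mul_comm]
  simp only [Matrix.mul_assoc]

end HilbertSchmidt

section SquareIntegrable

variable {Ω : Type*} {mΩ : MeasurableSpace Ω} {P : Measure Ω} {n : ℕ}

lemma memLp_two_apply_of_integrable_hsNormSq {H : Ω → Matrix (Fin n) (Fin n) ℝ}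
    (hH : Measurable H) (hH2 : Integrable (fun ω => hsNormSq (H ω)) P) (i j : Fin n) :
    MemLp (fun ω => H ω i j) 2 P := by
  have hij : Measurable fun ω => H ω i j := measurable_matrix_iff.1 hH i j
  refine (memLp_two_iff_integrable_sq hij.aestronglyMeasurable).2 ?_
  refine hH2.mono' (hij.pow_const 2).aestronglyMeasurable (.of_forall fun ω => ?_)
  rw [Real.norm_of_nonneg (sq_nonneg _)]
  exact sq_apply_le_hsNormSq (H ω) i j

lemma integrable_hsInner {X Y : Ω → Matrix (Fin n) (Fin n) ℝ}
    (hX : ∀ i j, MemLp (fun ω => X ω i j) 2 P) (hY : ∀ i j, MemLp (fun ω => Y ω i j) 2 P) :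
    Integrable (fun ω => hsInner (X ω) (Y ω)) P := by
  simp only [hsInner, trace, Matrix.diag]
  exact integrable_finsetSum _ fun i _ =>
    integrable_mul_apply_of_memLp_two (fun a b => hX b a) hY i i

lemma integral_hsNormSq_finsetSum_of_orthogonal {ι : Type*} [LinearOrder ι] {s : Finset ι}
    {X : ι → Ω → Matrix (Fin n) (Fin n) ℝ}
    (hX : ∀ k ∈ s, ∀ i j, MemLp (fun ω => X k ω i j) 2 P)
    (horth : ∀ k ∈ s, ∀ l ∈ s, k < l → ∫ ω, hsInner (X k ω) (X l ω) ∂P = 0) :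
    ∫ ω, hsNormSq (∑ k ∈ s, X k ω) ∂P = ∑ k ∈ s, ∫ ω, hsNormSq (X k ω) ∂P := by
  have hint : ∀ k ∈ s, ∀ l ∈ s, Integrable (fun ω => hsInner (X k ω) (X l ω)) P :=
    fun k hk l hl => integrable_hsInner (hX k hk) (hX l hl)
  simp only [hsNormSq_finsetSum]
  rw [integral_finsetSum _ fun k hk => integrable_finsetSum _ fun l hl => hint k hk l hl]
  refine sum_congr rfl fun k hk => ?_
  rw [integral_finsetSum _ fun l hl => hint k hk l hl]
  refine sum_eq_single_of_mem k hk fun l hl hlk => ?_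
  rcases hlk.lt_or_gt with hlk | hkl
  · simp only [hsInner_comm (X k _)]
    exact horth l hl k hk hlk
  · exact horth k hk l hl hkl

end SquareIntegrable

section IndependentIncrement

variable {Ω ι κ : Type*} [Fintype κ] {mΩ : MeasurableSpace Ω} {P : Measure Ω} {v : ℝ}
  {D : Ω → Matrix ι κ ℝ}

lemma integral_mul_transpose_apply [DecidableEq ι] (hD2 : ∀ a j, MemLp (fun ω => D ω a j) 2 P)
    (hD_mean : ∀ a j, ∫ ω, D ω a j ∂P = 0) (hD_sq : ∀ a j, ∫ ω, D ω a j ^ 2 ∂P = v)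
    (hD_indep : iIndepFun (fun p : ι × κ => fun ω => D ω p.1 p.2) P) (a b : ι) :
    ∫ ω, (D ω * (D ω)ᵀ) a b ∂P = if a = b then Fintype.card κ * v else 0 := by
  have hint (j : κ) : Integrable (fun ω => D ω a j * D ω b j) P :=
    (hD2 a j).integrable_mul (hD2 b j)
  simp only [mul_apply, transpose_apply]
  rw [integral_finsetSum _ fun j _ => hint j]
  split_ifs with hab
  · subst hab
    simp only [← sq, hD_sq, sum_const, card_univ, nsmul_eq_mul]
  · refine sum_eq_zero fun j _ => ?_
    have hind : IndepFun (fun ω => D ω a j) (fun ω => D ω b j) P :=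
      hD_indep.indepFun (i := (a, j)) (j := (b, j)) (by simp [hab])
    rw [hind.integral_fun_mul_eq_mul_integral (hD2 a j).1 (hD2 b j).1, hD_mean, zero_mul]

end IndependentIncrement

section OneStep

variable {Ω : Type*} {mΩ : MeasurableSpace Ω} {P : Measure Ω} {n : ℕ} {G : MeasurableSpace Ω}
  {H D : Ω → Matrix (Fin n) (Fin n) ℝ}

lemma integral_hsInner_mul_eq_zero_of_indep {X : Ω → Matrix (Fin n) (Fin n) ℝ}
    (hX : Measurable[G] X) (hH : Measurable[G] H) (hD : Indep (.comap D inferInstance) G P)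
    (hX2 : ∀ i j, MemLp (fun ω => X ω i j) 2 P) (hH2 : ∀ i j, MemLp (fun ω => H ω i j) 2 P)
    (hD1 : ∀ a j, Integrable (fun ω => D ω a j) P) (hD_mean : ∀ a j, ∫ ω, D ω a j ∂P = 0) :
    ∫ ω, hsInner (X ω) (H ω * D ω) ∂P = 0 := by
  have hindep : IndepFun (fun ω => (X ω)ᵀ * H ω) D P :=
    indepFun_comp_of_indep_comap hD (hX.matrix_transpose.matrix_mul hH) measurable_id
  simp only [hsInner, ← Matrix.mul_assoc]
  rw [integral_trace_mul_of_indepFun hindep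
    (integrable_mul_apply_of_memLp_two (fun a b => hX2 b a) hH2) hD1]
  simp only [hD_mean, mul_zero, sum_const_zero]

lemma integral_hsNormSq_mul_of_indep {v : ℝ} (hH : Measurable[G] H)
    (hH2 : ∀ i j, MemLp (fun ω => H ω i j) 2 P) (hD : Indep (.comap D inferInstance) G P)
    (hD2 : ∀ a j, MemLp (fun ω => D ω a j) 2 P) (hD_mean : ∀ a j, ∫ ω, D ω a j ∂P = 0)
    (hD_sq : ∀ a j, ∫ ω, D ω a j ^ 2 ∂P = v)
    (hD_indep : iIndepFun (fun p : Fin n × Fin n => fun ω => D ω p.1 p.2) P) :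
    ∫ ω, hsNormSq (H ω * D ω) ∂P = n * v * ∫ ω, hsNormSq (H ω) ∂P := by
  have hindep : IndepFun (fun ω => (H ω)ᵀ * H ω) (fun ω => D ω * (D ω)ᵀ) P :=
    indepFun_comp_of_indep_comap hD (hH.matrix_transpose.matrix_mul hH)
      (measurable_id.matrix_mul measurable_id.matrix_transpose)
  have hHH : ∀ a b, Integrable (fun ω => ((H ω)ᵀ * H ω) a b) P :=
    integrable_mul_apply_of_memLp_two (fun a b => hH2 b a) hH2
  simp only [hsNormSq_mul]
  rw [integral_trace_mul_of_indepFun hindep hHH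
    (integrable_mul_apply_of_memLp_two hD2 fun a b => hD2 b a)]
  simp only [integral_mul_transpose_apply hD2 hD_mean hD_sq hD_indep, mul_ite, mul_zero,
    sum_ite_eq', mem_univ, if_true, Fintype.card_fin, hsNormSq, hsInner, trace, Matrix.diag]
  rw [integral_finsetSum _ fun a _ => hHH a a, mul_sum]
  exact sum_congr rfl fun a _ => mul_comm _ _

end OneStep

theorem ito_isometry_simple_general
    {n : ℕ} {Ω : Type*} [mΩ : MeasurableSpace Ω]
    (P : Measure Ω) [IsProbabilityMeasure P]
    (m : ℕ) (t : ℕ → ℝ)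
    (ht_mono : ∀ k < m, t k < t (k + 1))
    (F : ℕ → MeasurableSpace Ω) (hF_mono : Monotone F) (hF_le : ∀ k, F k ≤ mΩ)
    (h ΔB : ℕ → Ω → Matrix (Fin n) (Fin n) ℝ)
    (hh_meas : ∀ k < m, @Measurable _ _ (F k) _ (h k))
    (hh_sq : ∀ k < m, Integrable (fun ω => hsNormSq (h k ω)) P)
    (hΔB_meas : ∀ k < m, @Measurable _ _ (F (k + 1)) _ (ΔB k))
    (hΔB_indep : ∀ k < m,
      Indep (MeasurableSpace.comap (ΔB k) matrixMeasurableSpace) (F k) P)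
    (hΔB_entries_indep : ∀ k < m,
      iIndepFun
        (fun p : Fin n × Fin n => fun ω => ΔB k ω p.1 p.2) P)
    (hΔB_gauss : ∀ k < m, ∀ i j : Fin n,
      Measure.map (fun ω => ΔB k ω i j) P
        = gaussianReal 0 (Real.toNNReal (t (k + 1) - t k))) :
    ∫ ω, hsNormSq (∑ k ∈ Finset.range m, h k ω * ΔB k ω) ∂P
      = (n : ℝ) * ∑ k ∈ Finset.range m,
          (t (k + 1) - t k) * ∫ ω, hsNormSq (h k ω) ∂P := by
  have hΔB_law (k : ℕ) (hk : k < m) (i j : Fin n) :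
      HasLaw (fun ω => ΔB k ω i j) (gaussianReal 0 (t (k + 1) - t k).toNNReal) P :=
    ⟨(measurable_matrix_iff.1 ((hΔB_meas k hk).mono (hF_le _) le_rfl) i j).aemeasurable,
      hΔB_gauss k hk i j⟩
  have hΔB2 (k : ℕ) (hk : k < m) (i j : Fin n) : MemLp (fun ω => ΔB k ω i j) 2 P :=
    (hΔB_law k hk i j).memLp_of_gaussianReal 2
  have hh2 (k : ℕ) (hk : k < m) : ∀ i j, MemLp (fun ω => h k ω i j) 2 P :=
    memLp_two_apply_of_integrable_hsNormSq ((hh_meas k hk).mono (hF_le k) le_rfl) (hh_sq k hk)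
  have hX2 (k : ℕ) (hk : k < m) : ∀ i j, MemLp (fun ω => (h k ω * ΔB k ω) i j) 2 P :=
    memLp_two_mul_apply_of_indepFun
      (indepFun_comp_of_indep_comap (hΔB_indep k hk) (hh_meas k hk) measurable_id)
      (hh2 k hk) (hΔB2 k hk)
  rw [integral_hsNormSq_finsetSum_of_orthogonal (fun k hk => hX2 k (mem_range.1 hk)), mul_sum]
  · refine sum_congr rfl fun k hk => ?_
    rw [mem_range] at hk
    rw [integral_hsNormSq_mul_of_indep (hh_meas k hk) (hh2 k hk) (hΔB_indep k hk) (hΔB2 k hk)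
      (fun i j => (hΔB_law k hk i j).integral_eq_of_gaussianReal)
      (fun i j => (hΔB_law k hk i j).integral_sq_of_gaussianReal) (hΔB_entries_indep k hk),
      Real.coe_toNNReal _ (sub_nonneg.2 (ht_mono k hk).le), mul_assoc]
  · intro k hk l hl hkl
    rw [mem_range] at hk hl
    have hXk : Measurable[F l] fun ω => h k ω * ΔB k ω :=
      ((hh_meas k hk).mono (hF_mono hkl.le) le_rfl).matrix_mul
        ((hΔB_meas k hk).mono (hF_mono hkl) le_rfl)
    exact integral_hsInner_mul_eq_zero_of_indep hXk (hh_meas l hl) (hΔB_indep l hl) (hX2 k hk)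
      (hh2 l hl) (fun a j => (hΔB2 l hl a j).integrable one_le_two)
      (fun a j => (hΔB_law l hl a j).integral_eq_of_gaussianReal)

/-- Itô isometry for simple processes: if `0 = t₀ < t₁ < ⋯ < t_m = T`,
`(𝓕_l)` is an increasing family of sub-σ-algebras, each `h_k` is `𝓕_k`-measurable and
square-integrable, and each `ΔB_k` is `𝓕_{k+1}`-measurable, independent of `𝓕_k`, with
independent centered Gaussian entries of variance `t_{k+1} − t_k`, then
`𝔼‖Σ_k h_k ΔB_k‖²_HS = n Σ_k (t_{k+1} − t_k) 𝔼‖h_k‖²_HS`. -/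
theorem ito_isometry_simple
    {n : ℕ} {Ω : Type*} [mΩ : MeasurableSpace Ω]
    (P : Measure Ω) [IsProbabilityMeasure P]
    (m : ℕ) (T : ℝ) (t : ℕ → ℝ)
    (ht0 : t 0 = 0) (htm : t m = T) (ht_mono : ∀ k < m, t k < t (k + 1))
    (F : ℕ → MeasurableSpace Ω) (hF_mono : Monotone F) (hF_le : ∀ k, F k ≤ mΩ)
    (h ΔB : ℕ → Ω → Matrix (Fin n) (Fin n) ℝ)
    (hh_meas : ∀ k < m, @Measurable _ _ (F k) _ (h k))
    (hh_sq : ∀ k < m, Integrable (fun ω => hsNormSq (h k ω)) P)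
    (hΔB_meas : ∀ k < m, @Measurable _ _ (F (k + 1)) _ (ΔB k))
    (hΔB_indep : ∀ k < m,
      Indep (MeasurableSpace.comap (ΔB k) matrixMeasurableSpace) (F k) P)
    (hΔB_entries_indep : ∀ k < m,
      iIndepFun
        (fun p : Fin n × Fin n => fun ω => ΔB k ω p.1 p.2) P)
    (hΔB_gauss : ∀ k < m, ∀ i j : Fin n,
      Measure.map (fun ω => ΔB k ω i j) P
        = gaussianReal 0 (Real.toNNReal (t (k + 1) - t k))) :
    ∫ ω, hsNormSq (∑ k ∈ Finset.range m, h k ω * ΔB k ω) ∂P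
      = (n : ℝ) * ∑ k ∈ Finset.range m,
          (t (k + 1) - t k) * ∫ ω, hsNormSq (h k ω) ∂P :=
  ito_isometry_simple_general (mΩ := mΩ) P m t ht_mono F hF_mono hF_le h ΔB hh_meas hh_sq hΔB_meas
    hΔB_indep hΔB_entries_indep hΔB_gauss
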